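/- (Hayman) If a power series f ∈ K with radius of convergence R > 0 belongs to the Hayman class, then f is strongly Gaussian. -/

import Mathlib

open Filter Topology MeasureTheory
open scoped ENNReal NNReal Classical

noncomputable section

/-- `psum a t = ∑ aₙ tⁿ`, the value `f(t)` of the power series with coefficients `a`. -/
def psum (a : ℕ → ℝ) (t : ℝ) : ℝ := ∑' n : ℕ, a n * t ^ n

/-- The mean `m_f(t)` of the Khinchin family of the power series with coefficients `a`. -/
def meanK (a : ℕ → ℝ) (t : ℝ) : ℝ :=
  (∑' n : ℕ, (n : ℝ) * a n * t ^ n) / ∑' n : ℕ, a n * t ^ n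

/-- The variance `σ_f²(t)` of the Khinchin family. -/
def varK (a : ℕ → ℝ) (t : ℝ) : ℝ :=
  (∑' n : ℕ, (n : ℝ) ^ 2 * a n * t ^ n) / (∑' n : ℕ, a n * t ^ n) - meanK a t ^ 2

/-- The standard deviation `σ_f(t)` of the Khinchin family. -/
def sdK (a : ℕ → ℝ) (t : ℝ) : ℝ := Real.sqrt (varK a t)

/-- The moment `E(X_t^p)` of real exponent `p` of the Khinchin family. -/
def momK (a : ℕ → ℝ) (p : ℝ) (t : ℝ) : ℝ :=
  (∑' n : ℕ, (n : ℝ) ^ p * a n * t ^ n) / ∑' n : ℕ, a n * t ^ n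

/-- The filter of `t ↑ R`: `atTop` when `R = ∞`, and `𝓝[<] R` when `R < ∞`. -/
def nhdsUpto (R : ℝ≥0∞) : Filter ℝ :=
  if R = ⊤ then atTop else nhdsWithin R.toReal (Set.Iio R.toReal)

/-- The power series `f` evaluated at a complex argument. -/
def Fc (a : ℕ → ℝ) (z : ℂ) : ℂ := ∑' n : ℕ, (a n : ℂ) * z ^ n

/-- The characteristic function `E(e^{iθ X̌_t})` of the normalized Khinchin variable:
`(f(t e^{iθ/σ_f(t)})/f(t)) · e^{-iθ m_f(t)/σ_f(t)}`. -/
def charN (a : ℕ → ℝ) (t θ : ℝ) : ℂ :=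
  Fc a ((t : ℂ) * Complex.exp (Complex.I * ((θ / sdK a t : ℝ) : ℂ))) / Fc a (t : ℂ) *
    Complex.exp (-Complex.I * ((θ * meanK a t / sdK a t : ℝ) : ℂ))

/-- `f` is strongly Gaussian: `σ_f(t) → ∞` and
`∫_{|θ|≤πσ_f(t)} |E(e^{iθX̌_t}) - e^{-θ²/2}| dθ → 0` as `t ↑ R`. -/
def StronglyGaussian (a : ℕ → ℝ) (R : ℝ≥0∞) : Prop :=
  Tendsto (sdK a) (nhdsUpto R) atTop ∧
    Tendsto (fun t => ∫ θ in (-(Real.pi * sdK a t))..(Real.pi * sdK a t),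
        ‖charN a t θ - ((Real.exp (-θ ^ 2 / 2) : ℝ) : ℂ)‖) (nhdsUpto R) (𝓝 0)

/-!
On the major arc `|E(e^{iθX̌_t}) - e^{-θ²/2}| ≤ ε e^{-θ²/2} ≤ 2ε(1 + θ²)⁻¹`, whose integral is at
most `2πε`. On the minor arc both `E(e^{iθX̌_t})` and the Gaussian are `O(ε/σ_f(t))`: the former by
the minor arc condition, the latter because the Gaussian is largest at the cut point
`θ₀ = h(t)σ_f(t)`, where the major arc condition gives `e^{-θ₀²/2} ≤ 2|E(e^{iθ₀X̌_t})|`. The minor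
arc has length at most `2πσ_f(t)`, so its contribution is `O(ε)` as well.
-/

lemma exp_neg_sq_half_le (θ : ℝ) : Real.exp (-θ ^ 2 / 2) ≤ 2 * (1 + θ ^ 2)⁻¹ := by
  have hx : 0 < 1 + θ ^ 2 / 2 := by positivity
  calc Real.exp (-θ ^ 2 / 2) = (Real.exp (θ ^ 2 / 2))⁻¹ := by rw [← Real.exp_neg, neg_div]
    _ ≤ (1 + θ ^ 2 / 2)⁻¹ := by
        gcongr
        linarith [Real.add_one_le_exp (θ ^ 2 / 2)]
    _ ≤ 2 * (1 + θ ^ 2)⁻¹ := by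
        rw [← div_eq_mul_inv, inv_eq_one_div, div_le_div_iff₀ hx (by positivity)]
        nlinarith [sq_nonneg θ]

lemma norm_sub_exp_neg_le {w : ℂ} {x ε : ℝ} (h : ‖w * (Real.exp x : ℂ) - 1‖ ≤ ε) :
    ‖w - (Real.exp (-x) : ℂ)‖ ≤ ε * Real.exp (-x) := by
  have hw : w - (Real.exp (-x) : ℂ) = (w * (Real.exp x : ℂ) - 1) * (Real.exp (-x) : ℂ) := by
    rw [sub_mul, mul_assoc, ← Complex.ofReal_mul, ← Real.exp_add, add_neg_cancel,
      Real.exp_zero, Complex.ofReal_one, mul_one, one_mul]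
  rw [hw, norm_mul, Complex.norm_real, Real.norm_of_nonneg (Real.exp_pos _).le]
  gcongr

lemma exp_neg_le_two_mul_norm {w : ℂ} {x ε : ℝ} (hε : ε ≤ 1 / 2)
    (h : ‖w * (Real.exp x : ℂ) - 1‖ < ε) : Real.exp (-x) ≤ 2 * ‖w‖ := by
  have hwx : 1 / 2 ≤ ‖w‖ * Real.exp x := by
    have := norm_sub_norm_le (1 : ℂ) (w * (Real.exp x : ℂ))
    rw [norm_one, norm_sub_rev, norm_mul, Complex.norm_real,
      Real.norm_of_nonneg (Real.exp_pos _).le] at this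
    linarith
  have hexp : Real.exp x * Real.exp (-x) = 1 := by
    rw [← Real.exp_add, add_neg_cancel, Real.exp_zero]
  nlinarith [Real.exp_pos (-x)]

lemma integral_le_of_le_inv_one_add_sq_add_const {F : ℝ → ℝ} {L c d : ℝ} (hL : 0 ≤ L)
    (hc : 0 ≤ c) (hF : IntervalIntegrable F volume (-L) L)
    (hle : ∀ θ ∈ Set.Icc (-L) L, F θ ≤ c * (1 + θ ^ 2)⁻¹ + d) :
    ∫ θ in (-L)..L, F θ ≤ c * Real.pi + 2 * L * d := by
  have hinv : Continuous fun θ : ℝ => (1 + θ ^ 2)⁻¹ :=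
    Continuous.inv₀ (by fun_prop) fun θ => by positivity
  have hbound : IntervalIntegrable (fun θ : ℝ => c * (1 + θ ^ 2)⁻¹) volume (-L) L :=
    (continuous_const.mul hinv).intervalIntegrable _ _
  calc ∫ θ in (-L)..L, F θ ≤ ∫ θ in (-L)..L, (c * (1 + θ ^ 2)⁻¹ + d) :=
        intervalIntegral.integral_mono_on (by linarith) hF
          (hbound.add intervalIntegrable_const) hle
    _ = c * (Real.arctan L - Real.arctan (-L)) + 2 * L * d := by
        rw [intervalIntegral.integral_add hbound intervalIntegrable_const,
          intervalIntegral.integral_const, intervalIntegral.integral_const_mul,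
          integral_inv_one_add_sq, smul_eq_mul]
        ring
    _ ≤ c * Real.pi + 2 * L * d := by
        gcongr
        linarith [Real.arctan_lt_pi_div_two L, Real.neg_pi_div_two_lt_arctan (-L)]

section Arcs

variable {φ : ℝ → ℂ} {σ θ₀ L ε : ℝ}

lemma norm_sub_gaussian_le (hσ : 0 < σ) (hθ₀ : 0 < θ₀) (hθ₀L : θ₀ ≤ L) (hε : 0 < ε)
    (hε' : ε ≤ 1 / 2)
    (hmaj : ∀ θ, |θ| ≤ θ₀ → ‖φ θ * (Real.exp (θ ^ 2 / 2) : ℂ) - 1‖ < ε)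
    (hmin : ∀ θ, θ₀ ≤ |θ| → |θ| ≤ L → σ * ‖φ θ‖ < ε) {θ : ℝ} (hθ : |θ| ≤ L) :
    ‖φ θ - (Real.exp (-θ ^ 2 / 2) : ℂ)‖ ≤ 2 * ε * (1 + θ ^ 2)⁻¹ + 3 * ε / σ := by
  have hεσ : 0 ≤ 3 * ε / σ := by positivity
  rcases le_or_gt |θ| θ₀ with hmajor | hminor
  · calc ‖φ θ - (Real.exp (-θ ^ 2 / 2) : ℂ)‖ ≤ ε * Real.exp (-θ ^ 2 / 2) := by
          rw [neg_div]; exact norm_sub_exp_neg_le (hmaj θ hmajor).le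
      _ ≤ ε * (2 * (1 + θ ^ 2)⁻¹) := by gcongr; exact exp_neg_sq_half_le θ
      _ ≤ 2 * ε * (1 + θ ^ 2)⁻¹ + 3 * ε / σ := by linarith
  · have hθ₀_abs : |θ₀| = θ₀ := abs_of_pos hθ₀
    have hcut : Real.exp (-θ₀ ^ 2 / 2) < 2 * ε / σ := by
      have hexp := exp_neg_le_two_mul_norm hε' (hmaj θ₀ hθ₀_abs.le)
      have hsmall := hmin θ₀ hθ₀_abs.ge (by rwa [hθ₀_abs])
      rw [lt_div_iff₀ hσ, neg_div]
      nlinarith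
    have hφ : ‖φ θ‖ ≤ ε / σ := by
      rw [le_div_iff₀ hσ]
      linarith [hmin θ hminor.le hθ]
    have hgauss : Real.exp (-θ ^ 2 / 2) ≤ Real.exp (-θ₀ ^ 2 / 2) := by
      have : θ₀ ^ 2 ≤ θ ^ 2 := by
        rw [← sq_abs θ]; exact pow_le_pow_left₀ hθ₀.le hminor.le 2
      gcongr
    have hpos : 0 ≤ 2 * ε * (1 + θ ^ 2)⁻¹ := by positivity
    calc ‖φ θ - (Real.exp (-θ ^ 2 / 2) : ℂ)‖
        ≤ ‖φ θ‖ + ‖(Real.exp (-θ ^ 2 / 2) : ℂ)‖ := norm_sub_le _ _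
      _ = ‖φ θ‖ + Real.exp (-θ ^ 2 / 2) := by
          rw [Complex.norm_real, Real.norm_of_nonneg (Real.exp_pos _).le]
      _ ≤ 2 * ε * (1 + θ ^ 2)⁻¹ + 3 * ε / σ := by
          have : ε / σ + 2 * ε / σ = 3 * ε / σ := by ring
          linarith

lemma integral_norm_sub_gaussian_le (hφ : Continuous φ) (hσ : 0 < σ) (hθ₀ : 0 < θ₀)
    (hθ₀L : θ₀ ≤ Real.pi * σ) (hε : 0 < ε) (hε' : ε ≤ 1 / 2)
    (hmaj : ∀ θ, |θ| ≤ θ₀ → ‖φ θ * (Real.exp (θ ^ 2 / 2) : ℂ) - 1‖ < ε)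
    (hmin : ∀ θ, θ₀ ≤ |θ| → |θ| ≤ Real.pi * σ → σ * ‖φ θ‖ < ε) :
    ∫ θ in (-(Real.pi * σ))..(Real.pi * σ), ‖φ θ - (Real.exp (-θ ^ 2 / 2) : ℂ)‖
      ≤ 8 * Real.pi * ε := by
  calc ∫ θ in (-(Real.pi * σ))..(Real.pi * σ), ‖φ θ - (Real.exp (-θ ^ 2 / 2) : ℂ)‖
      ≤ 2 * ε * Real.pi + 2 * (Real.pi * σ) * (3 * ε / σ) :=
        integral_le_of_le_inv_one_add_sq_add_const (by positivity) (by positivity)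
          ((hφ.sub (by fun_prop)).norm.intervalIntegrable _ _)
          fun θ hθ => norm_sub_gaussian_le hσ hθ₀ hθ₀L hε hε' hmaj hmin (abs_le.2 hθ)
    _ = 8 * Real.pi * ε := by field_simp; ring

end Arcs

lemma tendsto_nhds_zero_of_eventually_le_mul {α : Type*} {l : Filter α} {f : α → ℝ} (C : ℝ)
    (hf : ∀ x, 0 ≤ f x) (h : ∀ ε, 0 < ε → ε ≤ 1 / 2 → ∀ᶠ x in l, f x ≤ C * ε) :
    Tendsto f l (𝓝 0) := by
  rw [Metric.tendsto_nhds]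
  intro ε hε
  set δ := min (1 / 2) (ε / (2 * (|C| + 1))) with hδ
  have hδ0 : 0 < δ := lt_min (by norm_num) (by positivity)
  have hCδ : (|C| + 1) * δ ≤ ε / 2 := by
    calc (|C| + 1) * δ ≤ (|C| + 1) * (ε / (2 * (|C| + 1))) := by gcongr; exact min_le_right _ _
      _ = ε / 2 := by field_simp
  filter_upwards [h δ hδ0 (min_le_left _ _)] with x hx
  rw [Real.dist_0_eq_abs, abs_of_nonneg (hf x)]
  nlinarith [le_abs_self C]

lemma eventually_pos_ofReal_lt_nhdsUpto {R : ℝ≥0∞} (hR : 0 < R) :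
    ∀ᶠ t in nhdsUpto R, 0 < t ∧ ENNReal.ofReal t < R := by
  rw [nhdsUpto]
  split_ifs with hT
  · filter_upwards [eventually_gt_atTop 0] with t ht
    exact ⟨ht, hT ▸ ENNReal.ofReal_lt_top⟩
  · have hc : 0 < R.toReal := ENNReal.toReal_pos hR.ne' hT
    filter_upwards [Ioo_mem_nhdsLT (half_lt_self hc)] with t ht
    refine ⟨(half_pos hc).trans ht.1, ?_⟩
    rw [← ENNReal.ofReal_toReal hT]
    exact (ENNReal.ofReal_lt_ofReal_iff hc).2 ht.2

lemma continuous_Fc_circle {a : ℕ → ℝ} {t : ℝ} (hpos : ∀ n, 0 ≤ a n) (ht : 0 ≤ t)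
    (hs : Summable fun n => a n * t ^ n) :
    Continuous fun s : ℝ => Fc a (t * Complex.exp (Complex.I * s)) := by
  refine continuous_tsum (fun n => by fun_prop) hs fun n s => ?_
  rw [norm_mul, norm_pow, norm_mul, Complex.norm_real, Complex.norm_real,
    mul_comm Complex.I, Complex.norm_exp_ofReal_mul_I, mul_one,
    Real.norm_of_nonneg (hpos n), Real.norm_of_nonneg ht]

lemma continuous_charN {a : ℕ → ℝ} {t : ℝ} (hpos : ∀ n, 0 ≤ a n) (ht : 0 ≤ t)
    (hs : Summable fun n => a n * t ^ n) : Continuous (charN a t) :=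
  (((continuous_Fc_circle hpos ht hs).comp (continuous_id.div_const _)).div_const _).mul
    (by fun_prop)

theorem statement15_general (a : ℕ → ℝ) (R : ℝ≥0∞) (hR : 0 < R)
    (hpos : ∀ n, 0 ≤ a n)
    (hconv : ∀ t : ℝ, 0 ≤ t → ENNReal.ofReal t < R → Summable fun n => a n * t ^ n)
    (hvar : Tendsto (sdK a) (nhdsUpto R) atTop)
    (h : ℝ → ℝ) (hcut : ∀ t : ℝ, 0 < h t ∧ h t ≤ Real.pi)
    (hmajor : ∀ ε : ℝ, 0 < ε → ∀ᶠ t in nhdsUpto R, ∀ θ : ℝ, |θ| ≤ h t * sdK a t →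
        ‖charN a t θ * ((Real.exp (θ ^ 2 / 2) : ℝ) : ℂ) - 1‖ < ε)
    (hminor : ∀ ε : ℝ, 0 < ε → ∀ᶠ t in nhdsUpto R, ∀ θ : ℝ,
        h t * sdK a t ≤ |θ| → |θ| ≤ Real.pi * sdK a t → sdK a t * ‖charN a t θ‖ < ε) :
    StronglyGaussian a R := by
  have hnonneg (t : ℝ) : 0 ≤ ∫ θ in (-(Real.pi * sdK a t))..(Real.pi * sdK a t),
      ‖charN a t θ - ((Real.exp (-θ ^ 2 / 2) : ℝ) : ℂ)‖ :=
    intervalIntegral.integral_nonneg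
      (neg_le_self (mul_nonneg Real.pi_pos.le (Real.sqrt_nonneg _))) fun _ _ => norm_nonneg _
  refine ⟨hvar, tendsto_nhds_zero_of_eventually_le_mul (8 * Real.pi) hnonneg
    fun ε hε hε' => ?_⟩
  filter_upwards [hmajor ε hε, hminor ε hε, hvar.eventually_gt_atTop 0,
    eventually_pos_ofReal_lt_nhdsUpto hR] with t hmaj hmin hσ ⟨ht, htR⟩
  obtain ⟨hh, hhπ⟩ := hcut t
  exact integral_norm_sub_gaussian_le (continuous_charN hpos ht.le (hconv t ht.le htR)) hσ
    (mul_pos hh hσ) (by gcongr) hε hε' hmaj hmin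

/-- Hayman, Theorem 3.3.7. If `f ∈ K` with radius of convergence `R > 0`
belongs to the Hayman class — i.e. `σ_f(t) → ∞` as `t ↑ R`, and there is a cut function
`h : [0,R) → (0,π]` such that `sup_{|θ|≤h(t)σ_f(t)} |E(e^{iθX̌_t})e^{θ²/2} − 1| → 0`
(major arc) and `σ_f(t)·sup_{h(t)σ_f(t)≤|θ|≤πσ_f(t)} |E(e^{iθX̌_t})| → 0` (minor arc) —
then `f` is strongly Gaussian. -/
theorem statement15 (a : ℕ → ℝ) (R : ℝ≥0∞) (hR : 0 < R)
    (hpos : ∀ n, 0 ≤ a n) (ha0 : 0 < a 0) (ha1 : ∃ n, 1 ≤ n ∧ 0 < a n)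
    (hconv : ∀ t : ℝ, 0 ≤ t → ENNReal.ofReal t < R → Summable fun n => a n * t ^ n)
    (hdiv : ∀ t : ℝ, R < ENNReal.ofReal t → ¬ Summable fun n => a n * t ^ n)
    (hvar : Tendsto (sdK a) (nhdsUpto R) atTop)
    (h : ℝ → ℝ) (hcut : ∀ t : ℝ, 0 < h t ∧ h t ≤ Real.pi)
    (hmajor : ∀ ε : ℝ, 0 < ε → ∀ᶠ t in nhdsUpto R, ∀ θ : ℝ, |θ| ≤ h t * sdK a t →
        ‖charN a t θ * ((Real.exp (θ ^ 2 / 2) : ℝ) : ℂ) - 1‖ < ε)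
    (hminor : ∀ ε : ℝ, 0 < ε → ∀ᶠ t in nhdsUpto R, ∀ θ : ℝ,
        h t * sdK a t ≤ |θ| → |θ| ≤ Real.pi * sdK a t → sdK a t * ‖charN a t θ‖ < ε) :
    StronglyGaussian a R :=
  statement15_general a R hR hpos hconv hvar h hcut hmajor hminor
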